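/- arXiv:2305.08269 — 2 statements merged into one kernel-verified Lean document; each statement's English description precedes it below -/
import Mathlib

section
/- Let x, y ∈ {1} × [n]^L, b_1, b_2 ∈ {0,1}, v ∈ V, and let j be the maximum index with (x_1, …, x_j) = (y_1, …, y_j). If r̃_v((x,b_1),(y,b_2)) > 0, then v appears on Tail(j, S_y) or x = y. -/
open Finset

variable {n L : ℕ}

open Fin.NatCast in
/-- The segment of the staircase between milestones `x i` and `x (i+1)` (`0`-based `i`),
namely the path `P^{x_i, x_{i+1}}` of the all-pairs set of paths `P`. -/
def seg (P : Fin n → Fin n → List (Fin n)) (x : Fin (L + 1) → Fin n) (i : ℕ) :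
    List (Fin n) :=
  P (x i) (x (i + 1))

/-- The staircase `S_x` induced by the milestone sequence `x` and the all-pairs set of
paths `P`: the concatenation `P^{x_1,x_2} ∘ P^{x_2,x_3} ∘ ⋯ ∘ P^{x_L,x_{L+1}}` (as a walk;
each path after the first contributes everything but its first vertex). -/
def staircase (P : Fin n → Fin n → List (Fin n)) (x : Fin (L + 1) → Fin n) :
    List (Fin n) :=
  x 0 :: ((List.range L).flatMap fun i => (seg P x i).tail)

/-- The largest (`0`-based) segment index whose path contains `v`. -/
def segIdx (P : Fin n → Fin n → List (Fin n)) (x : Fin (L + 1) → Fin n) (v : Fin n) : ℕ :=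
  ((Finset.range L).filter fun i => v ∈ seg P x i).sup id

/-- The value function `f_x`: `f_x v = dist(v, 1)` if `v` is not on the staircase `S_x`,
and `f_x v = −(i·n + j)` if `v` is on `S_x`, where `i` is the maximum (1-based) index with
`v ∈ P^{x_i,x_{i+1}}` and `v` is the `j`-th vertex of `P^{x_i,x_{i+1}}`. -/
noncomputable def fx (G : SimpleGraph (Fin n)) (P : Fin n → Fin n → List (Fin n))
    (v₁ : Fin n) (x : Fin (L + 1) → Fin n) (v : Fin n) : ℤ :=
  if v ∈ staircase P x then
    -(((segIdx P x v : ℤ) + 1) * (n : ℤ) + (((seg P x (segIdx P x v)).idxOf v : ℤ) + 1))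
  else (G.dist v v₁ : ℤ)

/-- The function `g_{x,b}`, hiding the bit `b` at the last milestone `x_{L+1}` (second
component `b ∈ {0,1}` there, `−1` elsewhere). -/
noncomputable def gx (G : SimpleGraph (Fin n)) (P : Fin n → Fin n → List (Fin n))
    (v₁ : Fin n) (x : Fin (L + 1) → Fin n) (b : Bool) (v : Fin n) : ℤ × ℤ :=
  (fx G P v₁ x v, if v = x (Fin.last L) then (if b then 1 else 0) else -1)

/-- The maximum (1-based) index `j` such that `(x_1, …, x_j) = (y_1, …, y_j)`. -/
def maxPrefix (x y : Fin (L + 1) → Fin n) : ℕ :=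
  ((Finset.Icc 1 (L + 1)).filter fun j => ∀ i : Fin (L + 1), (i : ℕ) < j → x i = y i).sup id

/-- The relation `r`: zero if the bits agree or either sequence is not good (injective),
and `n ^ maxPrefix` otherwise. -/
noncomputable def rrel (p q : (Fin (L + 1) → Fin n) × Bool) : ℝ :=
  if p.2 = q.2 ∨ ¬ Function.Injective p.1 ∨ ¬ Function.Injective q.1 then 0
  else (n : ℝ) ^ maxPrefix p.1 q.1

/-- The relation `r_v`: equal to `r` if `g_{x,b₁}(v) ≠ g_{y,b₂}(v)` and `0` otherwise. -/
noncomputable def rv (G : SimpleGraph (Fin n)) (P : Fin n → Fin n → List (Fin n))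
    (v₁ v : Fin n) (p q : (Fin (L + 1) → Fin n) × Bool) : ℝ :=
  if gx G P v₁ p.1 p.2 v ≠ gx G P v₁ q.1 q.2 v then rrel p q else 0

/-- The relation `r̃_v`: equal to `r_v` if `μ(S_x, v) ≤ μ(S_y, v)` and `0` otherwise. -/
noncomputable def rvt (G : SimpleGraph (Fin n)) (P : Fin n → Fin n → List (Fin n))
    (v₁ v : Fin n) (p q : (Fin (L + 1) → Fin n) × Bool) : ℝ :=
  if (staircase P p.1).count v ≤ (staircase P q.1).count v then rv G P v₁ v p q else 0

open Fin.NatCast in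
/-- `Tail(j, S_x)` for a 1-based index `j ∈ [L]`: the walk
`P^{x_j,x_{j+1}} ∘ ⋯ ∘ P^{x_L,x_{L+1}}` with the first occurrence of `x_j` removed.
For `j = L + 1` it is the empty sequence. -/
def tailWalk (P : Fin n → Fin n → List (Fin n)) (x : Fin (L + 1) → Fin n) (j : ℕ) :
    List (Fin n) :=
  if j ≤ L then
    (seg P x (j - 1) ++ ((List.range L).drop j).flatMap fun i => (seg P x i).tail).erase
      (x (j - 1))
  else []

/-- The vertex congestion of the all-pairs set of paths `P`:
`max_{w} Σ_{u,v} (number of occurrences of w on P^{u,v})`. -/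
def congestion (P : Fin n → Fin n → List (Fin n)) : ℕ :=
  Finset.univ.sup fun w => ∑ u : Fin n, ∑ v : Fin n, (P u v).count w

/-- `N_v(u)`: the number of paths in `P` that start at `u` and contain `v`. -/
def Npaths (P : Fin n → Fin n → List (Fin n)) (v u : Fin n) : ℕ :=
  (Finset.univ.filter fun w => v ∈ P u w).card

/-!
Let `j` be the length of the common prefix of `x` and `y`; if `j = L + 1` then `x = y`.
Otherwise both staircases split as the common part `x₁ :: (tails of the first j - 1
segments)` followed by `Tail(j, ·)`. If `v` is not on `Tail(j, S_y)`, then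
`μ(S_x, v) ≤ μ(S_y, v)` forces `v` off `Tail(j, S_x)` as well. Off the tails, `v` can lie on
a segment `P^{x_i,x_{i+1}}` with `i ≥ j` only as its first vertex `x_i`; here `x_j = y_j`,
and for good `x`, `y` the milestones with `i > j` lie on the tails. So `v` meets the same
segments of `S_x` and `S_y` at the same positions and is not the last milestone, whence
`g_{x,b₁}(v) = g_{y,b₂}(v)` and `r̃_v` vanishes.
-/

open Fin.NatCast

def SameIdxOf {α : Type*} [BEq α] (v : α) (l₁ l₂ : List α) : Prop :=
  (v ∈ l₁ ↔ v ∈ l₂) ∧ (v ∈ l₁ → l₁.idxOf v = l₂.idxOf v)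

theorem sameIdxOf_cons {α : Type*} [BEq α] [LawfulBEq α] {v a b : α} {s t : List α}
    (hab : v = a ↔ v = b) (hs : v ∉ s) (ht : v ∉ t) : SameIdxOf v (a :: s) (b :: t) := by
  refine ⟨by simp [hab, hs, ht], fun hv => ?_⟩
  obtain rfl : v = a := by simpa [hs] using hv
  obtain rfl : v = b := hab.1 rfl
  simp

theorem List.mem_drop_range {i m N : ℕ} : i ∈ (List.range N).drop m ↔ m ≤ i ∧ i < N := by
  simp only [List.range_eq_range', List.drop_range', List.mem_range'_1]
  omega

def segTailsFrom (P : Fin n → Fin n → List (Fin n)) (x : Fin (L + 1) → Fin n) (m : ℕ) :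
    List (Fin n) :=
  ((List.range L).drop m).flatMap fun i => (seg P x i).tail

theorem staircase_eq_cons_append (P : Fin n → Fin n → List (Fin n)) (x : Fin (L + 1) → Fin n)
    (m : ℕ) :
    staircase P x =
      x 0 :: ((((List.range L).take m).flatMap fun i => (seg P x i).tail) ++
        segTailsFrom P x m) := by
  rw [staircase, segTailsFrom, ← List.flatMap_append, List.take_append_drop]

section Staircase

variable {P : Fin n → Fin n → List (Fin n)} {x y : Fin (L + 1) → Fin n} {v : Fin n}

theorem seg_eq_cons_tail (hhead : ∀ u w, (P u w).head? = some u) {i : ℕ} :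
    seg P x i = x i :: (seg P x i).tail :=
  (List.cons_head?_tail (hhead _ _)).symm

theorem milestone_mem_seg_tail (hhead : ∀ u w, (P u w).head? = some u)
    (hlast : ∀ u w, (P u w).getLast? = some w) (hx : Function.Injective x) {i : ℕ}
    (hi : i < L) : x (i + 1) ∈ (seg P x i).tail := by
  have hmem : x (i + 1) ∈ seg P x i := List.mem_of_mem_getLast? (hlast _ _)
  rw [seg_eq_cons_tail hhead, List.mem_cons] at hmem
  refine hmem.resolve_left fun h => ?_
  have := congrArg Fin.val (hx h)
  rw [← Nat.cast_succ, Fin.val_cast_of_lt (by omega), Fin.val_cast_of_lt (by omega)] at this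
  omega

theorem notMem_seg_tail_of_notMem_segTailsFrom {m i : ℕ} (hv : v ∉ segTailsFrom P x m)
    (hm : m ≤ i) (hi : i < L) : v ∉ (seg P x i).tail :=
  fun h => hv (List.mem_flatMap.2 ⟨i, List.mem_drop_range.2 ⟨hm, hi⟩, h⟩)

theorem exists_mem_seg_of_mem_staircase (hL : 0 < L) (hhead : ∀ u w, (P u w).head? = some u)
    (hv : v ∈ staircase P x) : ∃ i < L, v ∈ seg P x i := by
  rw [staircase, List.mem_cons, List.mem_flatMap] at hv
  rcases hv with rfl | ⟨i, hi, hvi⟩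
  · exact ⟨0, hL, by rw [seg_eq_cons_tail hhead]; simp⟩
  · exact ⟨i, List.mem_range.1 hi, List.mem_of_mem_tail hvi⟩

theorem tailWalk_eq_segTailsFrom (hhead : ∀ u w, (P u w).head? = some u) {j : ℕ} (hj : 1 ≤ j)
    (hjL : j ≤ L) : tailWalk P y j = segTailsFrom P y (j - 1) := by
  obtain ⟨k, rfl⟩ := Nat.exists_eq_add_of_le' hj
  rw [tailWalk, if_pos hjL, Nat.add_sub_cancel, segTailsFrom,
    List.drop_eq_getElem_cons (i := k) (l := List.range L) (by simp; omega), List.flatMap_cons,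
    List.getElem_range, seg_eq_cons_tail hhead (x := y) (i := k)]
  simp

theorem notMem_segTailsFrom_of_count_le {m : ℕ} (h0 : x 0 = y 0)
    (hpre : (((List.range L).take m).flatMap fun i => (seg P x i).tail) =
      ((List.range L).take m).flatMap fun i => (seg P y i).tail)
    (hcount : (staircase P x).count v ≤ (staircase P y).count v)
    (hvy : v ∉ segTailsFrom P y m) : v ∉ segTailsFrom P x m := by
  rw [staircase_eq_cons_append P x m, staircase_eq_cons_append P y m, List.count_cons,
    List.count_cons, List.count_append, List.count_append, h0, hpre,
    List.count_eq_zero.2 hvy] at hcount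
  rw [← List.count_eq_zero]
  omega

end Staircase

section Milestones

variable {P : Fin n → Fin n → List (Fin n)} {x y : Fin (L + 1) → Fin n} {v : Fin n}

theorem maxPrefix_spec (h0 : x 0 = y 0) :
    1 ≤ maxPrefix x y ∧ maxPrefix x y ≤ L + 1 ∧
      ∀ i : ℕ, i < maxPrefix x y → x i = y i := by
  have hone : 1 ∈ (Finset.Icc 1 (L + 1)).filter
      fun j => ∀ i : Fin (L + 1), (i : ℕ) < j → x i = y i := by
    simp only [Finset.mem_filter, Finset.mem_Icc, Nat.lt_one_iff, Fin.val_eq_zero_iff]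
    exact ⟨by omega, fun i hi => hi ▸ h0⟩
  obtain ⟨j, hj, hsup⟩ := Finset.exists_mem_eq_sup _ ⟨1, hone⟩ id
  rw [maxPrefix, hsup, id]
  rw [Finset.mem_filter, Finset.mem_Icc] at hj
  refine ⟨hj.1.1, hj.1.2, fun i hi => hj.2 _ ?_⟩
  rwa [Fin.val_cast_of_lt (by omega)]

theorem seg_eq_of_prefix {j i : ℕ} (hxy : ∀ k : ℕ, k < j → x k = y k) (hi : i + 1 < j) :
    seg P x i = seg P y i := by
  rw [seg, seg, hxy i (by omega), ← Nat.cast_succ, hxy (i + 1) hi]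

theorem flatMap_take_eq_of_prefix {j : ℕ} (hxy : ∀ k : ℕ, k < j → x k = y k) :
    (((List.range L).take (j - 1)).flatMap fun i => (seg P x i).tail) =
      ((List.range L).take (j - 1)).flatMap fun i => (seg P y i).tail := by
  refine List.flatMap_congr fun i hi => ?_
  rw [List.take_range, List.mem_range] at hi
  rw [seg_eq_of_prefix hxy (by omega)]

theorem ne_milestone_of_notMem_segTailsFrom (hhead : ∀ u w, (P u w).head? = some u)
    (hlast : ∀ u w, (P u w).getLast? = some w) (hx : Function.Injective x) {m i : ℕ}
    (hv : v ∉ segTailsFrom P x m) (hm : m ≤ i) (hi : i < L) : v ≠ x (i + 1) :=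
  fun h => notMem_seg_tail_of_notMem_segTailsFrom hv hm hi
    (h ▸ milestone_mem_seg_tail hhead hlast hx hi)

theorem seg_sameIdxOf (hhead : ∀ u w, (P u w).head? = some u)
    (hlast : ∀ u w, (P u w).getLast? = some w) (hx : Function.Injective x)
    (hy : Function.Injective y) {j : ℕ} (hj : 1 ≤ j) (hxy : ∀ k : ℕ, k < j → x k = y k)
    (hvx : v ∉ segTailsFrom P x (j - 1)) (hvy : v ∉ segTailsFrom P y (j - 1)) {i : ℕ}
    (hi : i < L) : SameIdxOf v (seg P x i) (seg P y i) := by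
  rcases Nat.lt_or_ge (i + 1) j with hlt | hge
  · rw [seg_eq_of_prefix hxy hlt]
    exact ⟨Iff.rfl, fun _ => rfl⟩
  rw [seg_eq_cons_tail hhead (x := x), seg_eq_cons_tail hhead (x := y)]
  refine sameIdxOf_cons ?_ (notMem_seg_tail_of_notMem_segTailsFrom hvx (by omega) hi)
    (notMem_seg_tail_of_notMem_segTailsFrom hvy (by omega) hi)
  rcases Nat.eq_or_lt_of_le hge with heq | hlt
  · rw [hxy i (by omega)]
  · obtain ⟨k, rfl⟩ : ∃ k, i = k + 1 := ⟨i - 1, by omega⟩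
    have hvx' := ne_milestone_of_notMem_segTailsFrom hhead hlast hx hvx (i := k)
      (by omega) (by omega)
    have hvy' := ne_milestone_of_notMem_segTailsFrom hhead hlast hy hvy (i := k)
      (by omega) (by omega)
    rw [Nat.cast_succ]
    exact iff_of_false hvx' hvy'

end Milestones

section Values

variable {G : SimpleGraph (Fin n)} {P : Fin n → Fin n → List (Fin n)} {v₁ v : Fin n}
  {x y : Fin (L + 1) → Fin n}

theorem segIdx_spec (h : ∃ i < L, v ∈ seg P x i) :
    segIdx P x v < L ∧ v ∈ seg P x (segIdx P x v) := by
  obtain ⟨i, hi, hvi⟩ := h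
  obtain ⟨k, hk, hsup⟩ := Finset.exists_mem_eq_sup
    ((Finset.range L).filter fun i => v ∈ seg P x i) ⟨i, by simp [hi, hvi]⟩ id
  rw [segIdx, hsup]
  simpa using hk

theorem fx_eq_of_sameIdxOf (hL : 0 < L) (hhead : ∀ u w, (P u w).head? = some u)
    (hstair : v ∈ staircase P x ↔ v ∈ staircase P y)
    (hseg : ∀ i < L, SameIdxOf v (seg P x i) (seg P y i)) :
    fx G P v₁ x v = fx G P v₁ y v := by
  have hidx : segIdx P x v = segIdx P y v := by
    rw [segIdx, segIdx, Finset.filter_congr fun i hi => (hseg i (Finset.mem_range.1 hi)).1]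
  by_cases hvx : v ∈ staircase P x
  · obtain ⟨hlt, hmem⟩ := segIdx_spec (exists_mem_seg_of_mem_staircase hL hhead hvx)
    rw [fx, fx, if_pos hvx, if_pos (hstair.1 hvx), ← hidx, (hseg _ hlt).2 hmem]
  · rw [fx, fx, if_neg hvx, if_neg (mt hstair.2 hvx)]

theorem gx_eq_of_notMem_segTailsFrom (hhead : ∀ u w, (P u w).head? = some u)
    (hlast : ∀ u w, (P u w).getLast? = some w) (hx : Function.Injective x)
    (hy : Function.Injective y) {j : ℕ} (hj : 1 ≤ j) (hjL : j ≤ L)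
    (hxy : ∀ k : ℕ, k < j → x k = y k) (hvx : v ∉ segTailsFrom P x (j - 1))
    (hvy : v ∉ segTailsFrom P y (j - 1)) (b₁ b₂ : Bool) :
    gx G P v₁ x b₁ v = gx G P v₁ y b₂ v := by
  have hlastL : ((L - 1 : ℕ) : Fin (L + 1)) + 1 = Fin.last L := by
    rw [← Nat.cast_succ, Nat.succ_eq_add_one, Nat.sub_add_cancel (by omega), Fin.natCast_eq_last]
  have hvlx : v ≠ x (Fin.last L) := hlastL ▸
    ne_milestone_of_notMem_segTailsFrom hhead hlast hx hvx (by omega) (by omega)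
  have hvly : v ≠ y (Fin.last L) := hlastL ▸
    ne_milestone_of_notMem_segTailsFrom hhead hlast hy hvy (by omega) (by omega)
  have hstair : v ∈ staircase P x ↔ v ∈ staircase P y := by
    have h0 : x 0 = y 0 := by simpa using hxy 0 hj
    rw [staircase_eq_cons_append P x (j - 1), staircase_eq_cons_append P y (j - 1),
      flatMap_take_eq_of_prefix hxy, h0]
    simp only [List.mem_cons, List.mem_append, hvx, hvy, or_false]
  rw [gx, gx, fx_eq_of_sameIdxOf (by omega) hhead hstair
    fun i hi => seg_sameIdxOf hhead hlast hx hy hj hxy hvx hvy hi, if_neg hvlx, if_neg hvly]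

theorem of_rvt_pos {b₁ b₂ : Bool} (hpos : 0 < rvt G P v₁ v (x, b₁) (y, b₂)) :
    (staircase P x).count v ≤ (staircase P y).count v ∧
      gx G P v₁ x b₁ v ≠ gx G P v₁ y b₂ v ∧
      Function.Injective x ∧ Function.Injective y := by
  unfold rvt rv rrel at hpos
  split_ifs at hpos with hcount hg hr <;> try exact absurd hpos (lt_irrefl 0)
  simp only [not_or, not_not] at hr
  exact ⟨hcount, hg, hr.2⟩

end Values

open Fin.NatCast in
theorem stmt12_general (hn : 0 < n)
    (G : SimpleGraph (Fin n))
    (P : Fin n → Fin n → List (Fin n))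
    (hhead : ∀ u v, (P u v).head? = some u)
    (hlast : ∀ u v, (P u v).getLast? = some v)
    (x y : Fin (L + 1) → Fin n)
    (hx0 : x 0 = (⟨0, hn⟩ : Fin n)) (hy0 : y 0 = (⟨0, hn⟩ : Fin n))
    (b₁ b₂ : Bool) (v : Fin n)
    (hpos : 0 < rvt G P ⟨0, hn⟩ v (x, b₁) (y, b₂)) :
    v ∈ tailWalk P y (maxPrefix x y) ∨ x = y := by
  obtain ⟨hcount, hg, hx, hy⟩ := of_rvt_pos hpos
  have h0 : x 0 = y 0 := hx0.trans hy0.symm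
  obtain ⟨hj, -, hxy⟩ := maxPrefix_spec h0
  rcases Nat.lt_or_ge L (maxPrefix x y) with hLj | hjL
  · exact Or.inr (funext fun i => by simpa using hxy i (by omega))
  refine Or.inl (by_contra fun hvy => hg ?_)
  rw [tailWalk_eq_segTailsFrom hhead hj hjL] at hvy
  have hvx := notMem_segTailsFrom_of_count_le h0 (flatMap_take_eq_of_prefix hxy) hcount hvy
  exact gx_eq_of_notMem_segTailsFrom hhead hlast hx hy hj hjL hxy hvx hvy b₁ b₂

/-- Let `x, y ∈ {1} × [n]^L`, `b₁, b₂ ∈ {0,1}`, `v ∈ V`, and let `j` be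
the maximum index with `(x_1, …, x_j) = (y_1, …, y_j)`.  If `r̃_v((x,b₁),(y,b₂)) > 0`,
then `v` appears on `Tail(j, S_y)` or `x = y`. -/
theorem stmt12 (hn : 0 < n) (hL : 0 < L)
    (G : SimpleGraph (Fin n)) (hconn : G.Connected)
    (P : Fin n → Fin n → List (Fin n))
    (hhead : ∀ u v, (P u v).head? = some u)
    (hlast : ∀ u v, (P u v).getLast? = some v)
    (hchain : ∀ u v, (P u v).Chain' G.Adj)
    (hnodup : ∀ u v, (P u v).Nodup)
    (hself : ∀ u, P u u = [u])
    (x y : Fin (L + 1) → Fin n)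
    (hx0 : x 0 = (⟨0, hn⟩ : Fin n)) (hy0 : y 0 = (⟨0, hn⟩ : Fin n))
    (b₁ b₂ : Bool) (v : Fin n)
    (hpos : 0 < rvt G P ⟨0, hn⟩ v (x, b₁) (y, b₂)) :
    v ∈ tailWalk P y (maxPrefix x y) ∨ x = y :=
  stmt12_general hn G P hhead hlast x y hx0 hy0 b₁ b₂ v hpos
end

section
/- Assume (L+1)² ≤ n, and let g be the vertex congestion of 𝒫. Then for every vertex v ∈ V and every finite set 𝒵 of pairs (x, b) with b ∈ {0,1} and x ∈ {1} × [n]^L good: Σ_{P_1 ∈ 𝒵} Σ_{P_2 ∈ 𝒵} r_v(P_1, P_2) ≤ 6·g·n^L·|𝒵|. -/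
open Finset

variable {n L : ℕ}

/-!
Split `r_v ≤ r̃_v(P₁, P₂) + r̃_v(P₂, P₁)` according to which of the two staircases passes through
`v` more often; it then suffices to bound every row sum `∑_{P₂} r̃_v((x, b), P₂)` by `3 g n^L`.

Let `y` share exactly the prefix `x_1, …, x_j` with `x`, `j ≤ L`, and `r̃_v((x, b), (y, b')) ≠ 0`.
Then `v` lies on some `P^{y_i, y_{i+1}}` with `i ≥ j`: otherwise `v` is on none of the later
segments of `S_y`, hence, since it occurs on `S_x` at most as often as on `S_y`, on none of the
later segments of `S_x`, and `g_{x,b}(v) = g_{y,b'}(v)`. For `i = j` there are at most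
`N_v(x_j) n^{L-j}` such `y`, for each `i > j` at most `Γ_v n^{L-j-1}`, where `Γ_v ≤ g` is the
number of paths through `v`. Each contributes `n^j`, and `∑_j N_v(x_j) ≤ g`, `L² ≤ n`, `n ≤ g`
bound the row sum by `n^{L+1} + g n^L + L² g n^{L-1} ≤ 3 g n^L`.
-/

theorem card_mul_pow_card_le_of_eqOn {ι α β : Type*} [Fintype ι] [DecidableEq ι] [Fintype α]
    [DecidableEq α] [DecidableEq β] {s : Finset (ι → α)} {t : Finset β} {f : (ι → α) → β}
    (hf : ∀ y ∈ s, f y ∈ t) {A : Finset ι}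
    (hA : ∀ y ∈ s, ∀ y' ∈ s, f y = f y' → ∀ k ∈ A, y k = y' k) :
    #s * Fintype.card α ^ #A ≤ #t * Fintype.card α ^ Fintype.card ι := by
  have hfiber : ∀ b ∈ t, #{y ∈ s | f y = b} ≤ Fintype.card α ^ #Aᶜ := by
    intro b _
    rcases (s.filter (f · = b)).eq_empty_or_nonempty with he | ⟨z, hz⟩
    · simp [he]
    rw [mem_filter] at hz
    calc #{y ∈ s | f y = b}
        ≤ #(Fintype.piFinset fun k => if k ∈ A then {z k} else univ) := by
          refine card_le_card fun y hy => Fintype.mem_piFinset.2 fun k => ?_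
          rw [mem_filter] at hy
          split_ifs with hk
          · exact mem_singleton.2 (hA y hy.1 z hz.1 (hy.2.trans hz.2.symm) k hk)
          · exact mem_univ _
      _ = Fintype.card α ^ #Aᶜ := by
          simp [Fintype.card_piFinset, apply_ite, prod_ite, compl_eq_univ_sdiff,
            filter_notMem_eq_sdiff]
  calc #s * Fintype.card α ^ #A ≤ Fintype.card α ^ #Aᶜ * #t * Fintype.card α ^ #A :=
        Nat.mul_le_mul_right _ (card_le_mul_card_image_of_maps_to hf _ hfiber)
    _ = #t * Fintype.card α ^ Fintype.card ι := by
        rw [mul_comm _ #t, mul_assoc, ← pow_add, card_compl, Nat.sub_add_cancel (card_le_univ A)]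

def pathsThrough (P : Fin n → Fin n → List (Fin n)) (v : Fin n) : Finset (Fin n × Fin n) :=
  univ.filter fun uw => v ∈ P uw.1 uw.2

theorem sum_count_le_congestion (P : Fin n → Fin n → List (Fin n)) (v : Fin n) :
    ∑ u, ∑ w, (P u w).count v ≤ congestion P :=
  le_sup (f := fun v => ∑ u, ∑ w, (P u w).count v) (mem_univ v)

theorem sum_Npaths_eq_card_pathsThrough (P : Fin n → Fin n → List (Fin n)) (v : Fin n) :
    ∑ u, Npaths P v u = #(pathsThrough P v) := by
  simp only [Npaths, pathsThrough, card_filter, ← univ_product_univ, sum_product]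

theorem card_pathsThrough_le_congestion (P : Fin n → Fin n → List (Fin n)) (v : Fin n) :
    #(pathsThrough P v) ≤ congestion P := by
  refine le_trans ?_ (sum_count_le_congestion P v)
  rw [← sum_Npaths_eq_card_pathsThrough]
  refine sum_le_sum fun u _ => ?_
  rw [Npaths, card_filter]
  exact sum_le_sum fun w _ => by split_ifs with h <;> simp [h]

theorem le_congestion (P : Fin n → Fin n → List (Fin n)) (hhead : ∀ u v, (P u v).head? = some u)
    (v : Fin n) : n ≤ congestion P := by
  refine le_trans ?_ (card_pathsThrough_le_congestion P v)
  have hv : ∀ w, v ∈ P v w := fun w => List.mem_of_mem_head? (hhead v w)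
  calc n = #((univ : Finset (Fin n)).map ⟨(v, ·), Prod.mk_right_injective v⟩) := by simp
    _ ≤ #(pathsThrough P v) := card_le_card fun uw h => by
        obtain ⟨w, -, rfl⟩ := mem_map.1 h
        exact mem_filter.2 ⟨mem_univ _, hv w⟩

section
open Fin.NatCast

variable {P : Fin n → Fin n → List (Fin n)} {x y : Fin (L + 1) → Fin n} {v : Fin n}

theorem val_natCast_of_le {i : ℕ} (h : i ≤ L) : ((i : Fin (L + 1)) : ℕ) = i :=
  Fin.val_cast_of_lt (Nat.lt_succ_of_le h)

theorem natCast_injOn : Set.InjOn (Nat.cast : ℕ → Fin (L + 1)) {i | i ≤ L} :=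
  fun i hi j hj h => by rw [← val_natCast_of_le hi, ← val_natCast_of_le hj, h]

theorem seg_eq (i : ℕ) : seg P x i = P (x i) (x (i + 1 : ℕ)) := by
  simp [seg]

theorem seg_eq_cons (hhead : ∀ u v, (P u v).head? = some u) (i : ℕ) :
    seg P x i = x i :: (seg P x i).tail := by
  rw [seg_eq]
  exact (List.cons_head?_tail (hhead _ _)).symm

theorem mem_seg_iff (hhead : ∀ u v, (P u v).head? = some u) (i : ℕ) :
    v ∈ seg P x i ↔ v = x i ∨ v ∈ (seg P x i).tail := by
  conv_lhs => rw [seg_eq_cons hhead]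
  exact List.mem_cons

theorem mem_tail_seg (hhead : ∀ u v, (P u v).head? = some u)
    (hlast : ∀ u v, (P u v).getLast? = some v) (hx : Function.Injective x) {i : ℕ} (hi : i < L) :
    x (i + 1 : ℕ) ∈ (seg P x i).tail := by
  have hne : x i ≠ x (i + 1 : ℕ) := fun h => by
    have := natCast_injOn (L := L) (by simp; omega) (by simp; omega) (hx h)
    omega
  have hl : (seg P x i).getLast? = some (x (i + 1 : ℕ)) := by rw [seg_eq]; exact hlast _ _
  rw [seg_eq_cons hhead] at hl
  rcases ht : (seg P x i).tail with _ | ⟨a, t⟩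
  · simp only [ht, List.getLast?_singleton, Option.some.injEq] at hl
    exact absurd hl hne
  · rw [ht, List.getLast?_cons_cons] at hl
    exact List.mem_of_getLast? hl

theorem notMem_seg_of_notMem_tail (hhead : ∀ u v, (P u v).head? = some u)
    (hlast : ∀ u v, (P u v).getLast? = some v) (hx : Function.Injective x) {m : ℕ}
    (hvm : v ≠ x m) (htail : ∀ i, m ≤ i → i < L → v ∉ (seg P x i).tail) :
    ∀ i, m ≤ i → i < L → v ∉ seg P x i := by
  intro i hmi hi hv
  rcases (mem_seg_iff hhead i).1 hv with rfl | hv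
  · rcases hmi.eq_or_lt with rfl | hmi
    · exact hvm rfl
    · have := mem_tail_seg hhead hlast hx (i := i - 1) (by omega)
      rw [Nat.sub_add_cancel (by omega)] at this
      exact htail (i - 1) (by omega) (by omega) this
  · exact htail i hmi hi hv

theorem last_mem_seg (hhead : ∀ u v, (P u v).head? = some u)
    (hlast : ∀ u v, (P u v).getLast? = some v) (hx : Function.Injective x) (hL : 0 < L) :
    x (Fin.last L) ∈ seg P x (L - 1) := by
  have := List.mem_of_mem_tail (mem_tail_seg hhead hlast hx (i := L - 1) (by omega))
  rwa [Nat.sub_add_cancel hL, Fin.natCast_eq_last] at this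

theorem count_staircase :
    (staircase P x).count v = [x 0].count v + ∑ i ∈ range L, (seg P x i).tail.count v := by
  simp [staircase, List.count_cons, List.count_flatMap, Finset.sum, Multiset.range, add_comm,
    Function.comp_def]

theorem notMem_seg_of_count_le (hhead : ∀ u v, (P u v).head? = some u)
    (hlast : ∀ u v, (P u v).getLast? = some v) (hx : Function.Injective x) {m : ℕ} (hm : m < L)
    (hpre : ∀ k ≤ m, x k = y k) (hy : ∀ i, m ≤ i → i < L → v ∉ seg P y i)
    (hcount : (staircase P x).count v ≤ (staircase P y).count v) :
    ∀ i, m ≤ i → i < L → v ∉ seg P x i := by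
  have hseg : ∀ i < m, seg P x i = seg P y i := fun i hi => by
    rw [seg_eq, seg_eq, hpre i hi.le, hpre (i + 1) hi]
  have hytail : ∑ i ∈ Ico m L, (seg P y i).tail.count v = 0 :=
    sum_eq_zero fun i hi => List.count_eq_zero.2 fun h =>
      hy i (mem_Ico.1 hi).1 (mem_Ico.1 hi).2 (List.mem_of_mem_tail h)
  have hxtail : ∑ i ∈ Ico m L, (seg P x i).tail.count v = 0 := by
    rw [count_staircase, count_staircase, ← sum_range_add_sum_Ico _ hm.le,
      ← sum_range_add_sum_Ico _ hm.le, hytail, sum_congr rfl fun i hi => by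
        rw [hseg i (mem_range.1 hi)]] at hcount
    have h0 : x 0 = y 0 := by simpa using hpre 0 (Nat.zero_le _)
    rw [h0] at hcount
    omega
  refine notMem_seg_of_notMem_tail hhead hlast hx ?_ fun i h1 h2 =>
    List.count_eq_zero.1 (sum_eq_zero_iff.1 hxtail i (mem_Ico.2 ⟨h1, h2⟩))
  rw [hpre m le_rfl]
  exact fun h => hy m le_rfl hm ((mem_seg_iff hhead m).2 (Or.inl h))

theorem segIdx_mem (hhead : ∀ u v, (P u v).head? = some u) (hL : 0 < L)
    (h : v ∈ staircase P x) : segIdx P x v ∈ (range L).filter fun i => v ∈ seg P x i := by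
  have hne : ((range L).filter fun i => v ∈ seg P x i).Nonempty := by
    simp only [staircase, List.mem_cons, List.mem_flatMap, List.mem_range] at h
    rcases h with rfl | ⟨i, hi, hv⟩
    · exact ⟨0, mem_filter.2 ⟨mem_range.2 hL, (mem_seg_iff hhead 0).2 (Or.inl (by simp))⟩⟩
    · exact ⟨i, mem_filter.2 ⟨mem_range.2 hi, List.mem_of_mem_tail hv⟩⟩
  obtain ⟨i, hi, he⟩ := exists_mem_eq_sup _ hne id
  rwa [segIdx, he]

theorem fx_eq_of_seg (hhead : ∀ u v, (P u v).head? = some u) (hL : 0 < L)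
    (G : SimpleGraph (Fin n)) (v₁ : Fin n) (h0 : x 0 = y 0)
    (h : ∀ i < L, seg P x i = seg P y i ∨ (v ∉ seg P x i ∧ v ∉ seg P y i)) :
    fx G P v₁ x v = fx G P v₁ y v := by
  have hmem : ∀ i < L, (v ∈ seg P x i ↔ v ∈ seg P y i) := fun i hi => by
    rcases h i hi with he | ⟨hx, hy⟩
    · rw [he]
    · exact iff_of_false hx hy
  have htail : ∀ i < L, (v ∈ (seg P x i).tail ↔ v ∈ (seg P y i).tail) := fun i hi => by
    rcases h i hi with he | ⟨hx, hy⟩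
    · rw [he]
    · exact iff_of_false (mt List.mem_of_mem_tail hx) (mt List.mem_of_mem_tail hy)
  have hstair : v ∈ staircase P x ↔ v ∈ staircase P y := by
    simp only [staircase, List.mem_cons, List.mem_flatMap, List.mem_range, h0]
    exact or_congr Iff.rfl (exists_congr fun i => and_congr_right fun hi => htail i hi)
  have hidx : segIdx P x v = segIdx P y v := by
    rw [segIdx, segIdx, filter_congr fun i hi => hmem i (mem_range.1 hi)]
  unfold fx
  by_cases hx : v ∈ staircase P x
  · obtain ⟨hlt, hv⟩ := mem_filter.1 (segIdx_mem hhead hL hx)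
    have hseg := (h _ (mem_range.1 hlt)).resolve_right fun hn => hn.1 hv
    rw [if_pos hx, if_pos (hstair.1 hx), ← hidx, hseg]
  · rw [if_neg hx, if_neg (mt hstair.2 hx)]

theorem exists_mem_seg_of_gx_ne (hhead : ∀ u v, (P u v).head? = some u)
    (hlast : ∀ u v, (P u v).getLast? = some v) (hL : 0 < L) (G : SimpleGraph (Fin n))
    (v₁ : Fin n) (hx : Function.Injective x) (hy : Function.Injective y) {m : ℕ} (hm : m < L)
    (hpre : ∀ k ≤ m, x k = y k) (hcount : (staircase P x).count v ≤ (staircase P y).count v)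
    {b₁ b₂ : Bool} (hg : gx G P v₁ x b₁ v ≠ gx G P v₁ y b₂ v) :
    ∃ i, m ≤ i ∧ i < L ∧ v ∈ seg P y i := by
  by_contra! hyv
  have hxv := notMem_seg_of_count_le hhead hlast hx hm hpre hyv hcount
  have hfx : fx G P v₁ x v = fx G P v₁ y v := by
    refine fx_eq_of_seg hhead hL G v₁ (by simpa using hpre 0 (Nat.zero_le _)) fun i hi => ?_
    rcases lt_or_ge i m with him | him
    · exact Or.inl (by rw [seg_eq, seg_eq, hpre i him.le, hpre (i + 1) him])
    · exact Or.inr ⟨hxv i him hi, hyv i him hi⟩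
  have hvx : v ≠ x (Fin.last L) := fun h =>
    hxv (L - 1) (by omega) (by omega) (h ▸ last_mem_seg hhead hlast hx hL)
  have hvy : v ≠ y (Fin.last L) := fun h =>
    hyv (L - 1) (by omega) (by omega) (h ▸ last_mem_seg hhead hlast hy hL)
  exact hg (by simp only [gx, hfx, if_neg hvx, if_neg hvy])

theorem sum_Npaths_comp_le_congestion (hx : Function.Injective x) :
    ∑ m ∈ range L, Npaths P v (x m) ≤ congestion P := by
  refine le_trans ?_ ((sum_Npaths_eq_card_pathsThrough P v).trans_le
    (card_pathsThrough_le_congestion P v))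
  rw [← sum_image fun i hi j hj h => natCast_injOn (L := L) (by simp at hi ⊢; omega)
    (by simp at hj ⊢; omega) (hx h)]
  exact sum_le_sum_of_subset (subset_univ _)

theorem card_image_natCast {s : Finset ℕ} (hs : ∀ i ∈ s, i ≤ L) :
    #(s.image (Nat.cast : ℕ → Fin (L + 1))) = #s :=
  card_image_of_injOn fun i hi j hj h => natCast_injOn (hs i hi) (hs j hj) h

theorem card_prefix_mem_seg_self_mul_le {m : ℕ} (hm : m < L) :
    #{y : Fin (L + 1) → Fin n | (∀ k ≤ m, y k = x k) ∧ v ∈ seg P y m} * n ^ (m + 2) ≤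
      Npaths P v (x m) * n ^ (L + 1) := by
  have hA : #((range (m + 2)).image (Nat.cast : ℕ → Fin (L + 1))) = m + 2 := by
    rw [card_image_natCast fun i hi => by simp at hi; omega, card_range]
  have key := card_mul_pow_card_le_of_eqOn (t := univ.filter fun w => v ∈ P (x m) w)
    (f := fun y => y (m + 1 : ℕ)) (A := (range (m + 2)).image Nat.cast) (s := univ.filter
      fun y : Fin (L + 1) → Fin n => (∀ k ≤ m, y k = x k) ∧ v ∈ seg P y m) ?_ ?_
  · simpa only [hA, Fintype.card_fin, Npaths] using key
  · intro y hy
    obtain ⟨hpre, hv⟩ := (mem_filter.1 hy).2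
    rw [seg_eq, hpre m le_rfl] at hv
    exact mem_filter.2 ⟨mem_univ _, hv⟩
  · intro y hy y' hy' he k hk
    obtain ⟨i, hi, rfl⟩ := mem_image.1 hk
    rcases Nat.lt_succ_iff_lt_or_eq.1 (mem_range.1 hi) with hi | rfl
    · rw [(mem_filter.1 hy).2.1 i (by omega), (mem_filter.1 hy').2.1 i (by omega)]
    · exact he

theorem card_prefix_mem_seg_mul_le {m i : ℕ} (hmi : m < i) (hi : i < L) :
    #{y : Fin (L + 1) → Fin n | (∀ k ≤ m, y k = x k) ∧ v ∈ seg P y i} * n ^ (m + 2) ≤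
      #(pathsThrough P v) * n ^ L := by
  set B : Finset ℕ := insert i (insert (i + 1) (range (m + 1)))
  have hA : #(B.image (Nat.cast : ℕ → Fin (L + 1))) = m + 3 := by
    rw [card_image_natCast fun k hk => by simp [B] at hk; omega, card_insert_of_notMem
      (by simp; omega), card_insert_of_notMem (by simp; omega), card_range]
  have key := card_mul_pow_card_le_of_eqOn (t := pathsThrough P v)
    (f := fun y => (y i, y (i + 1 : ℕ))) (A := B.image Nat.cast) (s := univ.filter
      fun y : Fin (L + 1) → Fin n => (∀ k ≤ m, y k = x k) ∧ v ∈ seg P y i) ?_ ?_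
  · rw [hA, Fintype.card_fin, Fintype.card_fin, pow_succ, pow_succ _ L, ← mul_assoc,
      ← mul_assoc] at key
    exact Nat.le_of_mul_le_mul_right key (Fin.pos v)
  · intro y hy
    have hv := (mem_filter.1 hy).2.2
    rw [seg_eq] at hv
    exact mem_filter.2 ⟨mem_univ _, hv⟩
  · intro y hy y' hy' he k hk
    obtain ⟨j, hj, rfl⟩ := mem_image.1 hk
    simp only [B, mem_insert, mem_range] at hj
    rcases hj with rfl | rfl | hj
    · exact (Prod.ext_iff.1 he).1
    · exact (Prod.ext_iff.1 he).2
    · rw [(mem_filter.1 hy).2.1 j (by omega), (mem_filter.1 hy').2.1 j (by omega)]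

-- `m + 1` plays the role of the header's `j`.
def prefixExtensionsThrough (P : Fin n → Fin n → List (Fin n)) (v : Fin n)
    (x : Fin (L + 1) → Fin n) (m : ℕ) : Finset (Fin (L + 1) → Fin n) :=
  univ.filter fun y => (∀ k ≤ m, y k = x k) ∧ ∃ i ∈ Ico m L, v ∈ seg P y i

theorem card_prefixExtensionsThrough_mul_le {m : ℕ} (hm : m < L) :
    #(prefixExtensionsThrough P v x m) * n ^ (m + 2) ≤
      Npaths P v (x m) * n ^ (L + 1) + L * #(pathsThrough P v) * n ^ L := by
  set S : ℕ → Finset (Fin (L + 1) → Fin n) := fun i =>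
    univ.filter fun y => (∀ k ≤ m, y k = x k) ∧ v ∈ seg P y i
  have hsub : prefixExtensionsThrough P v x m ⊆ S m ∪ (Ico (m + 1) L).biUnion S := by
    intro y hy
    obtain ⟨hpre, i, hi, hv⟩ := (mem_filter.1 hy).2
    obtain ⟨hmi, hi⟩ := mem_Ico.1 hi
    rcases hmi.eq_or_lt with rfl | hmi
    · exact mem_union_left _ (mem_filter.2 ⟨mem_univ _, hpre, hv⟩)
    · exact mem_union_right _ (mem_biUnion.2
        ⟨i, mem_Ico.2 ⟨hmi, hi⟩, mem_filter.2 ⟨mem_univ _, hpre, hv⟩⟩)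
  have hcard : #(prefixExtensionsThrough P v x m) ≤ #(S m) + ∑ i ∈ Ico (m + 1) L, #(S i) :=
    (card_le_card hsub).trans ((card_union_le _ _).trans (Nat.add_le_add_left card_biUnion_le _))
  calc #(prefixExtensionsThrough P v x m) * n ^ (m + 2)
      ≤ #(S m) * n ^ (m + 2) + ∑ i ∈ Ico (m + 1) L, #(S i) * n ^ (m + 2) := by
        rw [← sum_mul, ← add_mul]
        exact Nat.mul_le_mul_right _ hcard
    _ ≤ Npaths P v (x m) * n ^ (L + 1) + ∑ _i ∈ Ico (m + 1) L, #(pathsThrough P v) * n ^ L :=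
        add_le_add (card_prefix_mem_seg_self_mul_le hm) (sum_le_sum fun i hi =>
          card_prefix_mem_seg_mul_le (mem_Ico.1 hi).1 (mem_Ico.1 hi).2)
    _ ≤ Npaths P v (x m) * n ^ (L + 1) + L * #(pathsThrough P v) * n ^ L := by
        rw [sum_const, Nat.card_Ico, smul_eq_mul, ← mul_assoc]
        gcongr
        omega

theorem sum_card_prefixExtensionsThrough_mul_le (hx : Function.Injective x) (hLn : L * L ≤ n) :
    ∑ m ∈ range L, #(prefixExtensionsThrough P v x m) * n ^ (m + 1) ≤
      2 * congestion P * n ^ L := by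
  refine Nat.le_of_mul_le_mul_left ?_ (Fin.pos v)
  calc n * ∑ m ∈ range L, #(prefixExtensionsThrough P v x m) * n ^ (m + 1)
      = ∑ m ∈ range L, #(prefixExtensionsThrough P v x m) * n ^ (m + 2) := by
        rw [mul_sum]
        exact sum_congr rfl fun m _ => by ring
    _ ≤ ∑ m ∈ range L, (Npaths P v (x m) * n ^ (L + 1) + L * #(pathsThrough P v) * n ^ L) :=
        sum_le_sum fun m hm => card_prefixExtensionsThrough_mul_le (mem_range.1 hm)
    _ = (∑ m ∈ range L, Npaths P v (x m)) * n ^ (L + 1) +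
          (L * L) * (#(pathsThrough P v) * n ^ L) := by
        rw [sum_add_distrib, ← sum_mul, sum_const, card_range, smul_eq_mul]
        ring
    _ ≤ congestion P * n ^ (L + 1) + n * (congestion P * n ^ L) := by
        gcongr
        · exact sum_Npaths_comp_le_congestion hx
        · exact card_pathsThrough_le_congestion P v
    _ = n * (2 * congestion P * n ^ L) := by ring

end

theorem maxPrefix_comm (x y : Fin (L + 1) → Fin n) : maxPrefix x y = maxPrefix y x := by
  unfold maxPrefix
  congr 1
  exact filter_congr fun j _ => forall_congr' fun i => imp_congr_right fun _ => eq_comm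

theorem maxPrefix_mem {x y : Fin (L + 1) → Fin n} (h0 : x 0 = y 0) :
    maxPrefix x y ∈ (Icc 1 (L + 1)).filter fun j => ∀ i : Fin (L + 1), (i : ℕ) < j → x i = y i := by
  have hne :
      ((Icc 1 (L + 1)).filter fun j => ∀ i : Fin (L + 1), (i : ℕ) < j → x i = y i).Nonempty :=
    ⟨1, mem_filter.2 ⟨by simp, fun i hi => by rwa [show i = 0 from Fin.ext (Nat.lt_one_iff.1 hi)]⟩⟩
  obtain ⟨j, hj, he⟩ := exists_mem_eq_sup _ hne id
  rwa [maxPrefix, he]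

section

variable {G : SimpleGraph (Fin n)} {P : Fin n → Fin n → List (Fin n)} {v₁ v : Fin n}

theorem rrel_comm (p q : (Fin (L + 1) → Fin n) × Bool) : rrel p q = rrel q p := by
  simp only [rrel, maxPrefix_comm p.1, eq_comm (a := p.2)]
  exact if_congr (by tauto) rfl rfl

theorem rv_comm (p q : (Fin (L + 1) → Fin n) × Bool) : rv G P v₁ v p q = rv G P v₁ v q p := by
  rw [rv, rv, rrel_comm]
  exact if_congr ne_comm rfl rfl

theorem rvt_nonneg (p q : (Fin (L + 1) → Fin n) × Bool) : 0 ≤ rvt G P v₁ v p q := by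
  unfold rvt rv rrel
  split_ifs <;> positivity

theorem rv_le_rvt_add_rvt (p q : (Fin (L + 1) → Fin n) × Bool) :
    rv G P v₁ v p q ≤ rvt G P v₁ v p q + rvt G P v₁ v q p := by
  rcases le_total ((staircase P p.1).count v) ((staircase P q.1).count v) with h | h
  · rw [rvt, if_pos h]
    exact le_add_of_nonneg_right (rvt_nonneg q p)
  · have hqp : rvt G P v₁ v q p = rv G P v₁ v p q := by rw [rvt, if_pos h, rv_comm]
    rw [hqp]
    exact le_add_of_nonneg_left (rvt_nonneg p q)

theorem rvt_eq_of_ne_zero {p q : (Fin (L + 1) → Fin n) × Bool} (h : rvt G P v₁ v p q ≠ 0) :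
    (staircase P p.1).count v ≤ (staircase P q.1).count v ∧
      gx G P v₁ p.1 p.2 v ≠ gx G P v₁ q.1 q.2 v ∧ p.2 ≠ q.2 ∧
      rvt G P v₁ v p q = (n : ℝ) ^ maxPrefix p.1 q.1 := by
  unfold rvt rv rrel at h ⊢
  split_ifs at h ⊢ <;> simp_all

open Fin.NatCast in
theorem rvt_le (hL : 0 < L) (hhead : ∀ u v, (P u v).head? = some u)
    (hlast : ∀ u v, (P u v).getLast? = some v) {x : Fin (L + 1) → Fin n} (hx0 : x 0 = v₁)
    (hx : Function.Injective x) (b : Bool) {q : (Fin (L + 1) → Fin n) × Bool}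
    (hq0 : q.1 0 = v₁) (hq : Function.Injective q.1) :
    rvt G P v₁ v (x, b) q ≤ (if q = (x, !b) then (n : ℝ) ^ (L + 1) else 0) +
      ∑ m ∈ range L,
        if q ∈ prefixExtensionsThrough P v x m ×ˢ {!b} then (n : ℝ) ^ (m + 1) else 0 := by
  have hfst : 0 ≤ if q = (x, !b) then (n : ℝ) ^ (L + 1) else 0 := by positivity
  have hsnd : 0 ≤ ∑ m ∈ range L,
      if q ∈ prefixExtensionsThrough P v x m ×ˢ {!b} then (n : ℝ) ^ (m + 1) else 0 :=
    sum_nonneg fun _ _ => by positivity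
  by_cases hz : rvt G P v₁ v (x, b) q = 0
  · rw [hz]
    positivity
  obtain ⟨hcount, hg, hb, hval⟩ := rvt_eq_of_ne_zero hz
  dsimp only at hcount hg hb hval
  have hqb : q.2 = !b := by revert hb; cases q.2 <;> cases b <;> simp
  obtain ⟨hIcc, hagree⟩ := mem_filter.1 (maxPrefix_mem (hx0.trans hq0.symm))
  rw [hval]
  rcases (mem_Icc.1 hIcc).2.eq_or_lt with hj | hj
  · have hq : q = (x, !b) :=
      Prod.ext (funext fun i => (hagree i (by have := i.isLt; omega)).symm) hqb
    rw [if_pos hq, hj]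
    exact le_add_of_nonneg_right hsnd
  obtain ⟨m, hm⟩ := Nat.exists_eq_add_of_le' (mem_Icc.1 hIcc).1
  rw [hm] at hagree hj
  have hpre : ∀ k ≤ m, x k = q.1 k := fun k hk =>
    hagree k (by rw [val_natCast_of_le (by omega)]; omega)
  obtain ⟨i, hmi, hi, hv⟩ := exists_mem_seg_of_gx_ne hhead hlast hL G v₁ hx hq (m := m)
    (by omega) hpre hcount hg
  have hmem : q ∈ prefixExtensionsThrough P v x m ×ˢ {!b} := mem_product.2
    ⟨mem_filter.2 ⟨mem_univ _, fun k hk => (hpre k hk).symm, i, mem_Ico.2 ⟨hmi, hi⟩, hv⟩,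
      mem_singleton.2 hqb⟩
  calc (n : ℝ) ^ maxPrefix x q.1
      = if q ∈ prefixExtensionsThrough P v x m ×ˢ {!b} then (n : ℝ) ^ (m + 1) else 0 := by
        rw [if_pos hmem, hm]
    _ ≤ _ := single_le_sum (f := fun m =>
          if q ∈ prefixExtensionsThrough P v x m ×ˢ {!b} then (n : ℝ) ^ (m + 1) else 0)
        (fun _ _ => by positivity) (mem_range.2 (by omega))
    _ ≤ _ := le_add_of_nonneg_left hfst

theorem sum_rvt_le (hL : 0 < L) (hLn : L * L ≤ n) (hhead : ∀ u v, (P u v).head? = some u)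
    (hlast : ∀ u v, (P u v).getLast? = some v) {x : Fin (L + 1) → Fin n} (hx0 : x 0 = v₁)
    (hx : Function.Injective x) (b : Bool) {𝒵 : Finset ((Fin (L + 1) → Fin n) × Bool)}
    (h𝒵 : ∀ q ∈ 𝒵, q.1 0 = v₁ ∧ Function.Injective q.1) :
    ∑ q ∈ 𝒵, rvt G P v₁ v (x, b) q ≤ 3 * (congestion P : ℝ) * (n : ℝ) ^ L := by
  calc ∑ q ∈ 𝒵, rvt G P v₁ v (x, b) q
      ≤ ∑ q ∈ 𝒵, ((if q = (x, !b) then (n : ℝ) ^ (L + 1) else 0) + ∑ m ∈ range L,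
          if q ∈ prefixExtensionsThrough P v x m ×ˢ {!b} then (n : ℝ) ^ (m + 1) else 0) :=
        sum_le_sum fun q hq => rvt_le hL hhead hlast hx0 hx b (h𝒵 q hq).1 (h𝒵 q hq).2
    _ = (∑ q ∈ 𝒵, if q = (x, !b) then (n : ℝ) ^ (L + 1) else 0) + ∑ m ∈ range L, ∑ q ∈ 𝒵,
          if q ∈ prefixExtensionsThrough P v x m ×ˢ {!b} then (n : ℝ) ^ (m + 1) else 0 := by
        rw [sum_add_distrib, sum_comm]
    _ ≤ (n : ℝ) ^ (L + 1) +
          ∑ m ∈ range L, (#(prefixExtensionsThrough P v x m) : ℝ) * (n : ℝ) ^ (m + 1) := by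
        gcongr with m
        · rw [sum_ite_eq']
          split_ifs
          · exact le_rfl
          · positivity
        · rw [sum_ite_mem, sum_const, nsmul_eq_mul]
          gcongr
          exact (card_le_card inter_subset_right).trans (by simp)
    _ ≤ (congestion P : ℝ) * (n : ℝ) ^ L + 2 * (congestion P : ℝ) * (n : ℝ) ^ L := by
        gcongr
        · rw [pow_succ']
          gcongr
          exact_mod_cast le_congestion P hhead v
        · exact_mod_cast sum_card_prefixExtensionsThrough_mul_le hx hLn
    _ = 3 * (congestion P : ℝ) * (n : ℝ) ^ L := by ring

end

theorem stmt16_general (hn : 0 < n) (hL : 0 < L) (hLn : (L + 1) ^ 2 ≤ n)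
    (G : SimpleGraph (Fin n))
    (P : Fin n → Fin n → List (Fin n))
    (hhead : ∀ u v, (P u v).head? = some u)
    (hlast : ∀ u v, (P u v).getLast? = some v)
    (v : Fin n)
    (𝒵 : Finset ((Fin (L + 1) → Fin n) × Bool))
    (h𝒵 : ∀ p ∈ 𝒵, p.1 0 = (⟨0, hn⟩ : Fin n) ∧ Function.Injective p.1) :
    ∑ p₁ ∈ 𝒵, ∑ p₂ ∈ 𝒵, rv G P ⟨0, hn⟩ v p₁ p₂ ≤
      6 * (congestion P : ℝ) * (n : ℝ) ^ L * (𝒵.card : ℝ) := by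
  have hLL : L * L ≤ n := by nlinarith
  calc ∑ p₁ ∈ 𝒵, ∑ p₂ ∈ 𝒵, rv G P ⟨0, hn⟩ v p₁ p₂
      ≤ ∑ p₁ ∈ 𝒵, ∑ p₂ ∈ 𝒵, (rvt G P ⟨0, hn⟩ v p₁ p₂ + rvt G P ⟨0, hn⟩ v p₂ p₁) :=
        sum_le_sum fun _ _ => sum_le_sum fun _ _ => rv_le_rvt_add_rvt _ _
    _ = 2 * ∑ p₁ ∈ 𝒵, ∑ p₂ ∈ 𝒵, rvt G P ⟨0, hn⟩ v p₁ p₂ := by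
        rw [two_mul]
        simp only [sum_add_distrib]
        rw [sum_comm (f := fun p₁ p₂ => rvt G P ⟨0, hn⟩ v p₂ p₁)]
    _ ≤ 2 * ∑ _p ∈ 𝒵, 3 * (congestion P : ℝ) * (n : ℝ) ^ L := by
        gcongr with p hp
        exact sum_rvt_le hL hLL hhead hlast (h𝒵 p hp).1 (h𝒵 p hp).2 p.2 h𝒵
    _ = 6 * (congestion P : ℝ) * (n : ℝ) ^ L * (𝒵.card : ℝ) := by
        rw [sum_const, nsmul_eq_mul]
        ring

/-- Assume `(L+1)² ≤ n`, and let `g` be the vertex congestion of `𝒫`.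
Then for every vertex `v ∈ V` and every finite set `𝒵` of pairs `(x, b)` with
`b ∈ {0,1}` and `x ∈ {1} × [n]^L` good:
`Σ_{P₁ ∈ 𝒵} Σ_{P₂ ∈ 𝒵} r_v(P₁, P₂) ≤ 6 · g · n^L · |𝒵|`. -/
theorem stmt16 (hn : 0 < n) (hL : 0 < L) (hLn : (L + 1) ^ 2 ≤ n)
    (G : SimpleGraph (Fin n)) (hconn : G.Connected)
    (P : Fin n → Fin n → List (Fin n))
    (hhead : ∀ u v, (P u v).head? = some u)
    (hlast : ∀ u v, (P u v).getLast? = some v)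
    (hchain : ∀ u v, (P u v).Chain' G.Adj)
    (hnodup : ∀ u v, (P u v).Nodup)
    (hself : ∀ u, P u u = [u])
    (v : Fin n)
    (𝒵 : Finset ((Fin (L + 1) → Fin n) × Bool))
    (h𝒵 : ∀ p ∈ 𝒵, p.1 0 = (⟨0, hn⟩ : Fin n) ∧ Function.Injective p.1) :
    ∑ p₁ ∈ 𝒵, ∑ p₂ ∈ 𝒵, rv G P ⟨0, hn⟩ v p₁ p₂ ≤
      6 * (congestion P : ℝ) * (n : ℝ) ^ L * (𝒵.card : ℝ) :=
  stmt16_general hn hL hLn G P hhead hlast v 𝒵 h𝒵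
end
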